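/- (Quantile inflation via exchangeability with inflated level.) Let ε_1, ..., ε_{n+1} be exchangeable, let α' ≤ α in (0,1), and let Q̂(1-α') be the ⌈(1-α')(n+1)⌉-th smallest of ε_1,...,ε_n (set to +∞ if the index exceeds n). Then P(ε_{n+1} ≤ Q̂(1-α')) ≥ 1-α' ≥ 1-α, and moreover Q̂(1-α') ≥ Q̂(1-α) pointwise. -/

import Mathlib

open MeasureTheory
open scoped ENNReal

/-- The `k`-th smallest value (1-indexed) of a list of reals, as an extended real,
equal to `⊤` if `k` exceeds the length of the list. -/
noncomputable def kthSmallestE (l : List ℝ) (k : ℕ) : EReal :=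
  ((l.insertionSort (· ≤ ·)).map (fun x : ℝ => (x : EReal))).getD (k - 1) ⊤

lemma sortedE_getD_mono (s : List EReal) (hs : s.Pairwise (· ≤ ·)) {i j : ℕ} (hij : i ≤ j) :
    s.getD i ⊤ ≤ s.getD j ⊤ := by
  rcases lt_or_ge j s.length with hj | hj
  · have hi : i < s.length := lt_of_le_of_lt hij hj
    rw [List.getD_eq_getElem _ _ hi, List.getD_eq_getElem _ _ hj]
    rcases eq_or_lt_of_le hij with rfl | h
    · exact le_refl _
    · exact List.pairwise_iff_get.mp hs ⟨i, hi⟩ ⟨j, hj⟩ h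
  · rw [List.getD_eq_default _ _ hj]; exact le_top

lemma sorted_getD_lt_iff (s : List ℝ) (hs : s.Pairwise (· ≤ ·)) (x : ℝ) :
    ∀ i, i < s.length → (s.getD i 0 < x ↔ i < s.countP (fun y => decide (y < x))) := by
  induction s with
  | nil => intro i hi; simp at hi
  | cons a t ih =>
    intro i hi
    rcases List.pairwise_cons.mp hs with ⟨ha, ht⟩
    cases i with
    | zero =>
      simp only [List.getD_cons_zero, List.countP_cons]
      constructor
      · intro h; have hd : decide (a < x) = true := by simpa using h
        simp [hd]
      · intro h
        by_contra hax
        push_neg at hax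
        have hc : t.countP (fun y => decide (y < x)) = 0 := by
          rw [List.countP_eq_zero]; intro y hy
          simpa using not_lt.mpr (le_trans hax (ha y hy))
        simp [hc, not_lt.mpr hax] at h
    | succ i =>
      simp only [List.getD_cons_succ, List.countP_cons]
      by_cases hax : a < x
      · rw [ih ht i (by simpa using hi)]
        simp [hax]
      · have hc : t.countP (fun y => decide (y < x)) = 0 := by
          rw [List.countP_eq_zero]; intro y hy
          simpa using not_lt.mpr (le_trans (not_lt.mp hax) (ha y hy))
        have hit : i < t.length := by simpa using hi
        have hg : t.getD i 0 ∈ t := by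
          rw [List.getD_eq_getElem _ _ hit]; exact List.getElem_mem _
        constructor
        · intro h
          exact absurd h (not_lt.mpr (le_trans (not_lt.mp hax) (ha _ hg)))
        · intro h; simp [hc, hax] at h

lemma kth_lt_iff (l : List ℝ) (x : ℝ) (k : ℕ) (hk1 : 1 ≤ k) (hk : k - 1 < l.length) :
    kthSmallestE l k < (x : EReal) ↔ k ≤ l.countP (fun y => decide (y < x)) := by
  unfold kthSmallestE
  set s := l.insertionSort (· ≤ ·) with hs
  have hlen : s.length = l.length := List.length_insertionSort _ _
  have hi : k - 1 < s.length := hlen ▸ hk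
  have him : k - 1 < (s.map (fun x : ℝ => (x : EReal))).length := by simpa using hi
  rw [List.getD_eq_getElem _ _ him, List.getElem_map]
  rw [EReal.coe_lt_coe_iff]
  have h2 := sorted_getD_lt_iff s (List.pairwise_insertionSort _ l) x (k-1) hi
  rw [List.getD_eq_getElem _ _ hi] at h2
  rw [h2, (List.perm_insertionSort (· ≤ ·) l).countP_eq]
  omega

open Classical in
noncomputable def rnk {m : ℕ} (v : Fin m → ℝ) (j : Fin m) : ℕ :=
  (Finset.univ.filter (fun i => v i < v j)).card

lemma card_rank_ge_le {m : ℕ} (v : Fin m → ℝ) (k : ℕ) (hk : k ≤ m) :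
    (Finset.univ.filter (fun j => k ≤ rnk v j)).card ≤ m - k := by
  classical
  set σ := Tuple.sort v
  have hmono := Tuple.monotone_sort v
  have hsub : (Finset.univ.filter (fun i : Fin m => (i : ℕ) < k)).image σ ⊆
      Finset.univ.filter (fun j => rnk v j < k) := by
    intro j hj
    simp only [Finset.mem_image, Finset.mem_filter, Finset.mem_univ, true_and] at hj ⊢
    obtain ⟨i, hik, rfl⟩ := hj
    have hss : (Finset.univ.filter (fun a => v a < v (σ i))) ⊆
        (Finset.univ.filter (fun a : Fin m => σ.symm a < i)) := by
      intro a ha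
      simp only [Finset.mem_filter, Finset.mem_univ, true_and] at ha ⊢
      by_contra hcon
      push_neg at hcon
      have h2 : v (σ i) ≤ v (σ (σ.symm a)) := hmono hcon
      rw [Equiv.apply_symm_apply] at h2
      exact absurd ha (not_lt.mpr h2)
    calc rnk v (σ i) ≤ (Finset.univ.filter (fun a : Fin m => σ.symm a < i)).card := by
          unfold rnk; convert Finset.card_le_card hss using 2
      _ = (Finset.univ.filter (fun a : Fin m => a < i)).card := by
          apply Finset.card_bij (fun a _ => σ.symm a)
          · intro a ha; simpa using (Finset.mem_filter.mp ha).2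
          · intro a _ b _ h; exact σ.symm.injective h
          · intro b hb; exact ⟨σ b, by simpa using (Finset.mem_filter.mp hb).2, by simp⟩
      _ < k := by
          have h4 : Finset.univ.filter (fun a : Fin m => a < i) = Finset.Iio i := by
            ext a; simp
          rw [h4, Fin.card_Iio]
          exact hik
  have hcard1 : ((Finset.univ.filter (fun i : Fin m => (i : ℕ) < k)).image σ).card = k := by
    rw [Finset.card_image_of_injective _ σ.injective]
    have h5 : (Finset.univ.filter (fun i : Fin m => (i : ℕ) < k)) =
        Finset.univ.map (Fin.castLEEmb hk) := by
      ext a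
      simp only [Finset.mem_filter, Finset.mem_univ, true_and, Finset.mem_map]
      constructor
      · intro h
        exact ⟨⟨a, h⟩, by ext; simp [Fin.castLEEmb]⟩
      · rintro ⟨b, rfl⟩; simpa using b.isLt
    rw [h5]; simp
  have hcompl : (Finset.univ.filter (fun j => k ≤ rnk v j)) =
      (Finset.univ.filter (fun j => rnk v j < k))ᶜ := by
    ext j; simp [not_lt]
  rw [hcompl, Finset.card_compl]
  have h3 := Finset.card_le_card hsub
  rw [hcard1] at h3
  simp only [Fintype.card_fin]
  omega

lemma rnk_comp {m : ℕ} (v : Fin m → ℝ) (σ : Equiv.Perm (Fin m)) (j : Fin m) :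
    rnk (fun i => v (σ i)) j = rnk v (σ j) := by
  classical
  unfold rnk
  apply Finset.card_bij (fun i _ => σ i)
  · intro i hi
    simp only [Finset.mem_filter, Finset.mem_univ, true_and] at hi ⊢
    convert hi using 2
  · intro a _ b _ h; exact σ.injective h
  · intro b hb
    simp only [Finset.mem_filter, Finset.mem_univ, true_and] at hb
    refine ⟨σ.symm b, ?_, by simp⟩
    simp only [Finset.mem_filter, Finset.mem_univ, true_and]
    convert hb using 2
    simp

lemma countP_ofFn {n : ℕ} (f : Fin n → ℝ) (p : ℝ → Bool) [DecidablePred fun i => p (f i)] :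
    (List.ofFn f).countP p = (Finset.univ.filter (fun i => p (f i))).card := by
  induction n with
  | zero => simp
  | succ n ih =>
    rw [List.ofFn_succ, List.countP_cons, ih, Finset.card_filter, Finset.card_filter,
      Fin.sum_univ_succ]
    by_cases h : p (f 0) <;> simp [h, add_comm]

lemma card_filter_castSucc {n : ℕ} (P : Fin (n + 1) → Prop) [DecidablePred P]
    (hlast : ¬ P (Fin.last n)) :
    (Finset.univ.filter (fun i : Fin n => P i.castSucc)).card =
      (Finset.univ.filter P).card := by
  apply Finset.card_bij (fun i _ => i.castSucc)
  · intro i hi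
    simpa using (Finset.mem_filter.mp hi).2
  · intro a _ b _ h; exact Fin.castSucc_injective _ h
  · intro j hj
    have hP : P j := (Finset.mem_filter.mp hj).2
    have hne : j ≠ Fin.last n := fun h => hlast (h ▸ hP)
    obtain ⟨y, rfl⟩ := Fin.exists_castSucc_eq.2 hne
    exact ⟨y, by simpa using hP, rfl⟩

theorem stmt18 {Ω : Type*} [MeasurableSpace Ω] (μ : Measure Ω) [IsProbabilityMeasure μ]
    (n : ℕ) (hn : 0 < n) (α α' : ℝ) (hα : α ∈ Set.Ioo (0 : ℝ) 1)
    (hα' : α' ∈ Set.Ioo (0 : ℝ) 1) (hle : α' ≤ α)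
    (ε : Ω → Fin (n + 1) → ℝ) (hmeas : Measurable ε)
    (hexch : ∀ σ : Equiv.Perm (Fin (n + 1)),
      Measure.map (fun ω i => ε ω (σ i)) μ = Measure.map ε μ) :
    (ENNReal.ofReal (1 - α') ≤
        μ {ω | (ε ω (Fin.last n) : EReal) ≤
          kthSmallestE (List.ofFn (fun i : Fin n => ε ω i.castSucc))
            ⌈(1 - α') * (n + 1)⌉₊}) ∧
      (ENNReal.ofReal (1 - α) ≤
        μ {ω | (ε ω (Fin.last n) : EReal) ≤
          kthSmallestE (List.ofFn (fun i : Fin n => ε ω i.castSucc))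
            ⌈(1 - α') * (n + 1)⌉₊}) ∧
      ∀ ω, kthSmallestE (List.ofFn (fun i : Fin n => ε ω i.castSucc)) ⌈(1 - α) * (n + 1)⌉₊ ≤
        kthSmallestE (List.ofFn (fun i : Fin n => ε ω i.castSucc)) ⌈(1 - α') * (n + 1)⌉₊ := by
  classical
  obtain ⟨hα0, hα1⟩ := hα
  obtain ⟨hα'0, hα'1⟩ := hα'
  set k := ⌈(1 - α') * (n + 1)⌉₊ with hk_def
  set kα := ⌈(1 - α) * (n + 1)⌉₊ with hkα_def
  have hn1 : (0 : ℝ) < (n : ℝ) + 1 := by positivity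
  have hk1 : 1 ≤ k := Nat.ceil_pos.mpr (by nlinarith)
  have hkα1 : 1 ≤ kα := Nat.ceil_pos.mpr (by nlinarith)
  have hkk : kα ≤ k := Nat.ceil_le_ceil (by nlinarith)
  -- third bullet: monotonicity
  have hmono3 : ∀ ω,
      kthSmallestE (List.ofFn (fun i : Fin n => ε ω i.castSucc)) kα ≤
      kthSmallestE (List.ofFn (fun i : Fin n => ε ω i.castSucc)) k := by
    intro ω
    unfold kthSmallestE
    apply sortedE_getD_mono
    · exact List.Pairwise.map _ (fun a b h => EReal.coe_le_coe_iff.mpr h)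
        (List.pairwise_insertionSort _ _)
    · omega
  -- the quantile set
  have key : ENNReal.ofReal (1 - α') ≤
      μ {ω | (ε ω (Fin.last n) : EReal) ≤
        kthSmallestE (List.ofFn (fun i : Fin n => ε ω i.castSucc)) k} := by
    rcases le_or_gt k n with hkn | hkn
    · -- main case : k ≤ n
      set S : Fin (n + 1) → Set (Fin (n + 1) → ℝ) := fun j => {v | k ≤ rnk v j} with hS_def
      have hS : ∀ j, MeasurableSet (S j) := by
        intro j
        have hrepr : S j = ⋃ (T : Finset (Fin (n + 1))) (_ : T.card = k),
            ⋂ i ∈ T, {v : Fin (n + 1) → ℝ | v i < v j} := by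
          ext v
          simp only [hS_def, Set.mem_setOf_eq, Set.mem_iUnion, Set.mem_iInter]
          constructor
          · intro h
            obtain ⟨T, hTsub, hTcard⟩ :=
              Finset.exists_subset_card_eq h
            exact ⟨T, hTcard, fun i hi => (Finset.mem_filter.mp (hTsub hi)).2⟩
          · rintro ⟨T, hTcard, hT⟩
            calc k = T.card := hTcard.symm
              _ ≤ (Finset.univ.filter (fun i => v i < v j)).card := by
                  apply Finset.card_le_card
                  intro i hi
                  exact Finset.mem_filter.mpr ⟨Finset.mem_univ _, hT i hi⟩
              _ = rnk v j := rfl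
        rw [hrepr]
        apply MeasurableSet.iUnion
        intro T
        apply MeasurableSet.iUnion
        intro _
        apply Set.Finite.measurableSet_biInter (T.finite_toSet)
        intro i _
        exact measurableSet_lt (measurable_pi_apply i) (measurable_pi_apply j)
      have hperm : ∀ j, μ (ε ⁻¹' S j) = μ (ε ⁻¹' S (Fin.last n)) := by
        intro j
        set σ := Equiv.swap j (Fin.last n) with hσ
        have hmeas' : Measurable (fun ω i => ε ω (σ i)) :=
          measurable_pi_lambda _ (fun i => (measurable_pi_apply (σ i)).comp hmeas)
        rw [← Measure.map_apply hmeas (hS j), ← hexch σ, Measure.map_apply hmeas' (hS j)]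
        congr 1
        ext ω
        simp only [Set.mem_preimage, hS_def, Set.mem_setOf_eq]
        rw [show (fun i => ε ω (σ i)) = (fun i => (ε ω) (σ i)) from rfl, rnk_comp,
          hσ, Equiv.swap_apply_left]
      have hsum : ∑ _j : Fin (n + 1), μ (ε ⁻¹' S (Fin.last n)) ≤ ((n + 1 - k : ℕ) : ℝ≥0∞) := by
        calc ∑ _j : Fin (n + 1), μ (ε ⁻¹' S (Fin.last n))
            = ∑ j : Fin (n + 1), μ (ε ⁻¹' S j) := by
              exact Finset.sum_congr rfl (fun j _ => (hperm j).symm)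
          _ = ∑ j : Fin (n + 1), ∫⁻ ω, (ε ⁻¹' S j).indicator (1 : Ω → ℝ≥0∞) ω ∂μ := by
              refine Finset.sum_congr rfl (fun j _ => ?_)
              rw [lintegral_indicator_one (hmeas (hS j))]
          _ = ∫⁻ ω, ∑ j : Fin (n + 1), (ε ⁻¹' S j).indicator (1 : Ω → ℝ≥0∞) ω ∂μ := by
              rw [lintegral_finset_sum]
              intro j _
              exact (measurable_const.indicator (hmeas (hS j)))
          _ ≤ ∫⁻ _ω, ((n + 1 - k : ℕ) : ℝ≥0∞) ∂μ := by
              apply lintegral_mono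
              intro ω
              have hcard := card_rank_ge_le (ε ω) k (by omega)
              calc ∑ j : Fin (n + 1), (ε ⁻¹' S j).indicator (1 : Ω → ℝ≥0∞) ω
                  = ∑ j : Fin (n + 1), (if k ≤ rnk (ε ω) j then (1 : ℝ≥0∞) else 0) := by
                    refine Finset.sum_congr rfl (fun j _ => ?_)
                    by_cases h : k ≤ rnk (ε ω) j
                    · rw [if_pos h, Set.indicator_of_mem (by exact h)]
                      rfl
                    · rw [if_neg h]
                      exact Set.indicator_of_notMem (by exact h) _
                _ = ((Finset.univ.filter (fun j => k ≤ rnk (ε ω) j)).card : ℝ≥0∞) := by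
                    rw [Finset.card_filter]
                    push_cast
                    simp
                _ ≤ ((n + 1 - k : ℕ) : ℝ≥0∞) := by exact_mod_cast Nat.cast_le.mpr hcard
          _ = ((n + 1 - k : ℕ) : ℝ≥0∞) := by
              rw [lintegral_const, measure_univ, mul_one]
      have hlastle : μ (ε ⁻¹' S (Fin.last n)) ≤ ENNReal.ofReal α' := by
        have hsum2 : ((n + 1 : ℕ) : ℝ≥0∞) * μ (ε ⁻¹' S (Fin.last n)) ≤ ((n + 1 - k : ℕ) : ℝ≥0∞) := by
          calc ((n + 1 : ℕ) : ℝ≥0∞) * μ (ε ⁻¹' S (Fin.last n))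
              = ∑ _j : Fin (n + 1), μ (ε ⁻¹' S (Fin.last n)) := by
                rw [Finset.sum_const, Finset.card_univ, Fintype.card_fin, nsmul_eq_mul]
            _ ≤ _ := hsum
        have hreal : ((n + 1 - k : ℕ) : ℝ) ≤ α' * ((n : ℝ) + 1) := by
          have hceil : (1 - α') * ((n : ℝ) + 1) ≤ (k : ℝ) := Nat.le_ceil _
          have hcast : ((n + 1 - k : ℕ) : ℝ) = ((n : ℝ) + 1) - (k : ℝ) := by
            push_cast [Nat.cast_sub (by omega : k ≤ n + 1)]
            ring
          rw [hcast]
          nlinarith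
        have hne0 : ((n + 1 : ℕ) : ℝ≥0∞) ≠ 0 := by simp
        have hneT : ((n + 1 : ℕ) : ℝ≥0∞) ≠ ⊤ := by simp
        rw [← ENNReal.mul_le_mul_iff_right hne0 hneT]
        calc ((n + 1 : ℕ) : ℝ≥0∞) * μ (ε ⁻¹' S (Fin.last n))
            ≤ ((n + 1 - k : ℕ) : ℝ≥0∞) := hsum2
          _ = ENNReal.ofReal ((n + 1 - k : ℕ) : ℝ) := by rw [ENNReal.ofReal_natCast]
          _ ≤ ENNReal.ofReal (α' * ((n : ℝ) + 1)) := ENNReal.ofReal_le_ofReal hreal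
          _ = ENNReal.ofReal ((n : ℝ) + 1) * ENNReal.ofReal α' := by
              rw [mul_comm, ENNReal.ofReal_mul (by positivity)]
          _ = ((n + 1 : ℕ) : ℝ≥0∞) * ENNReal.ofReal α' := by
              congr 1
              rw [← ENNReal.ofReal_natCast (n + 1)]
              congr 1
              push_cast
              ring
      have hEq : {ω | (ε ω (Fin.last n) : EReal) ≤
          kthSmallestE (List.ofFn (fun i : Fin n => ε ω i.castSucc)) k} =
          (ε ⁻¹' S (Fin.last n))ᶜ := by
        ext ω
        simp only [Set.mem_setOf_eq, Set.mem_compl_iff, Set.mem_preimage, hS_def]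
        rw [← not_lt]
        apply not_congr
        rw [kth_lt_iff _ _ _ hk1 (by rw [List.length_ofFn]; omega)]
        rw [countP_ofFn]
        have congrk : ∀ a b : ℕ, a = b → (k ≤ a ↔ k ≤ b) := fun a b h => by rw [h]
        apply congrk
        unfold rnk
        apply Finset.card_bij (fun (i : Fin n) _ => i.castSucc)
        · intro i hi
          simp only [Finset.mem_filter, Finset.mem_univ, true_and,
            decide_eq_true_eq] at hi ⊢
          exact hi
        · intro a _ b _ h; exact Fin.castSucc_injective _ h
        · intro j hj
          have hP : ε ω j < ε ω (Fin.last n) := by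
            simpa using (Finset.mem_filter.mp hj).2
          have hne : j ≠ Fin.last n := by rintro rfl; exact lt_irrefl _ hP
          obtain ⟨y, rfl⟩ := Fin.exists_castSucc_eq.2 hne
          exact ⟨y, by simp [hP], rfl⟩
      rw [hEq, measure_compl (hmeas (hS (Fin.last n))) (measure_ne_top μ _), measure_univ]
      have h1 : ENNReal.ofReal (1 - α') = 1 - ENNReal.ofReal α' := by
        rw [ENNReal.ofReal_sub _ (le_of_lt hα'0), ENNReal.ofReal_one]
      rw [h1]
      exact tsub_le_tsub_left hlastle 1
    · -- degenerate case : k > n, quantile is ⊤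
      have hall : ∀ ω, (ε ω (Fin.last n) : EReal) ≤
          kthSmallestE (List.ofFn (fun i : Fin n => ε ω i.castSucc)) k := by
        intro ω
        have : kthSmallestE (List.ofFn (fun i : Fin n => ε ω i.castSucc)) k = ⊤ := by
          unfold kthSmallestE
          apply List.getD_eq_default
          rw [List.length_map, List.length_insertionSort, List.length_ofFn]
          omega
        rw [this]
        exact le_top
      have : {ω | (ε ω (Fin.last n) : EReal) ≤
          kthSmallestE (List.ofFn (fun i : Fin n => ε ω i.castSucc)) k} = Set.univ := by
        ext ω; simp [hall ω]
      rw [this, measure_univ]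
      exact ENNReal.ofReal_le_one.mpr (by linarith)
  refine ⟨key, le_trans (ENNReal.ofReal_le_ofReal (by linarith)) key, hmono3⟩
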